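/- Let I be a proper monomial ideal of A with M(I) finite and with X_i ∉ I for every i, and suppose that any two distinct truly isolated vertices of the survival complex have disjoint supports (share no variables). Then I equals the ideal generated by { X_i^{a_i + 1} : a truly isolated, i ∈ supp(a) } together with { X_i·X_j : a, b distinct truly isolated, i ∈ supp(a), j ∈ supp(b) }; consequently A/I is the fibre product over k of the pure power rings k[X_i : i ∈ supp(a)]/(X_i^{a_i+1} : i ∈ supp(a)), one for each truly isolated vertex a. -/

import Mathlib

open MvPolynomial

/-- An ideal of `k[X_1,…,X_n]` is a *monomial ideal* if it is generated by a set
of monomials. -/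
def IsMonomialIdeal {k : Type*} [Field k] {n : ℕ}
    (I : Ideal (MvPolynomial (Fin n) k)) : Prop :=
  ∃ S : Set ((Fin n) →₀ ℕ),
    I = Ideal.span ((fun a => (monomial a (1 : k) : MvPolynomial (Fin n) k)) '' S)

/-- `M(I)`: the vertices of the survival complex of `A/I`. -/
def survivors {k : Type*} [Field k] {n : ℕ}
    (I : Ideal (MvPolynomial (Fin n) k)) : Set ((Fin n) →₀ ℕ) :=
  {a | a ≠ 0 ∧ monomial a (1 : k) ∉ I}

/-- The truly isolated vertices of the survival complex of `A/I`. -/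
def trulyIsolatedSet {k : Type*} [Field k] {n : ℕ}
    (I : Ideal (MvPolynomial (Fin n) k)) : Set ((Fin n) →₀ ℕ) :=
  {a ∈ survivors I | ∀ i : Fin n, X i * monomial a (1 : k) ∈ I}

/-- The pure powers `X_i^{a_i+1}` with `a` truly isolated and `i ∈ supp a`. -/
def purePowerGens {k : Type*} [Field k] {n : ℕ}
    (I : Ideal (MvPolynomial (Fin n) k)) : Set (MvPolynomial (Fin n) k) :=
  {f | ∃ a ∈ trulyIsolatedSet I, ∃ i : Fin n, 0 < a i ∧ f = X i ^ (a i + 1)}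

/-- The cross products `X_i·X_j` of variables appearing in distinct truly
isolated vertices. -/
def crossGens {k : Type*} [Field k] {n : ℕ}
    (I : Ideal (MvPolynomial (Fin n) k)) : Set (MvPolynomial (Fin n) k) :=
  {f | ∃ a ∈ trulyIsolatedSet I, ∃ b ∈ trulyIsolatedSet I, a ≠ b ∧
    ∃ i j : Fin n, 0 < a i ∧ 0 < b j ∧ f = X i * X j}

/-- The ideal `(X_i^{a_i+1} : i ∈ supp a) + (X_j : j ∉ supp a)`, so that
`A` modulo this ideal is the pure power ring `k[X_i : i ∈ supp a]/(X_i^{a_i+1})`. -/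
noncomputable def pureComponentIdeal (k : Type*) [Field k] {n : ℕ} (a : (Fin n) →₀ ℕ) :
    Ideal (MvPolynomial (Fin n) k) :=
  Ideal.span ({f | ∃ i : Fin n, 0 < a i ∧ f = X i ^ (a i + 1)} ∪
    {f | ∃ j : Fin n, a j = 0 ∧ f = X j})

/-- The homogeneous maximal ideal `(X_1,…,X_n)` of `A`. -/
noncomputable def maxIdeal (k : Type*) [Field k] (n : ℕ) : Ideal (MvPolynomial (Fin n) k) :=
  Ideal.span (Set.range (X : Fin n → MvPolynomial (Fin n) k))


/-!
Pushing a monomial outside `I` up to a maximal one inside the finite set `M(I)` shows that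
`X^m ∉ I` exactly when `m` lies below some truly isolated vertex `a`. Since
`pureComponentIdeal k a = (X_i^{a_i+1} : all i)` contains `X^m` exactly when `m` is not below
`a`, this gives `I = ⋂ₐ pureComponentIdeal k a`, so `A/I` embeds into the product. Disjointness
of the supports means that a nonzero `m` lies below at most one vertex: this yields the stated
generators, and lets a compatible family `(f_a)` be glued to `C c + ∑ₐ (f_a - C c)|_{≤ a}`.
-/

section MonomialIdeal

variable {σ R : Type*} [CommSemiring R]

theorem monomial_one_mem_of_le {J : Ideal (MvPolynomial σ R)} {e m : σ →₀ ℕ}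
    (he : monomial e (1 : R) ∈ J) (hle : e ≤ m) : monomial m (1 : R) ∈ J := by
  have := J.mul_mem_right (monomial (m - e) 1) he
  rwa [monomial_mul, one_mul, add_tsub_cancel_of_le hle] at this

end MonomialIdeal

section

variable {k : Type*} [Field k] {n : ℕ}

namespace IsMonomialIdeal

variable {I : Ideal (MvPolynomial (Fin n) k)}

theorem mem_iff (hI : IsMonomialIdeal I) {f : MvPolynomial (Fin n) k} :
    f ∈ I ↔ ∀ m ∈ f.support, monomial m (1 : k) ∈ I := by
  classical
  obtain ⟨S, rfl⟩ := hI
  simp only [mem_ideal_span_monomial_image, support_monomial, one_ne_zero, if_false,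
    Finset.mem_singleton, forall_eq]

theorem le_of_monomial_mem (hI : IsMonomialIdeal I) {J : Ideal (MvPolynomial (Fin n) k)}
    (h : ∀ m, monomial m (1 : k) ∈ I → monomial m (1 : k) ∈ J) : I ≤ J := by
  obtain ⟨S, rfl⟩ := hI
  rw [Ideal.span_le]
  rintro _ ⟨s, hs, rfl⟩
  exact h s (Ideal.subset_span ⟨s, hs, rfl⟩)

end IsMonomialIdeal

section TrulyIsolated

variable {I : Ideal (MvPolynomial (Fin n) k)}

/-- A maximal survivor above `c` is truly isolated. -/
theorem exists_mem_trulyIsolatedSet_le (hfin : (survivors I).Finite) {c : Fin n →₀ ℕ}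
    (hc0 : c ≠ 0) (hc : monomial c (1 : k) ∉ I) : ∃ a ∈ trulyIsolatedSet I, c ≤ a := by
  obtain ⟨a, hca, hmax⟩ := hfin.exists_le_maximal (a := c) ⟨hc0, hc⟩
  refine ⟨a, ⟨hmax.prop, fun i => ?_⟩, hca⟩
  by_contra hi
  have hsucc : a + Finsupp.single i 1 ∈ survivors I :=
    ⟨by simp, by rwa [X, monomial_mul, one_mul, add_comm] at hi⟩
  have := hmax.eq_of_le hsucc le_self_add
  simp at this

theorem exists_mem_trulyIsolatedSet_pos (hfin : (survivors I).Finite)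
    (hX : ∀ i : Fin n, (X i : MvPolynomial (Fin n) k) ∉ I) (i : Fin n) :
    ∃ a ∈ trulyIsolatedSet I, 0 < a i := by
  obtain ⟨a, ha, hle⟩ := exists_mem_trulyIsolatedSet_le hfin (c := Finsupp.single i 1)
    (by simp) (hX i)
  exact ⟨a, ha, Finsupp.single_le_iff.mp hle⟩

theorem monomial_mem_iff_forall_not_le (hn : 1 ≤ n) (hfin : (survivors I).Finite)
    (hX : ∀ i : Fin n, (X i : MvPolynomial (Fin n) k) ∉ I) {m : Fin n →₀ ℕ} :
    monomial m (1 : k) ∈ I ↔ ∀ a ∈ trulyIsolatedSet I, ¬ m ≤ a := by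
  refine ⟨fun hm a ha hle => ha.1.2 (monomial_one_mem_of_le hm hle), fun h => ?_⟩
  by_contra hm
  rcases eq_or_ne m 0 with rfl | hm0
  · obtain ⟨a, ha, -⟩ := exists_mem_trulyIsolatedSet_pos hfin hX ⟨0, hn⟩
    exact h a ha zero_le
  · obtain ⟨a, ha, hle⟩ := exists_mem_trulyIsolatedSet_le hfin hm0 hm
    exact h a ha hle

end TrulyIsolated

section PureComponent

theorem pureComponentIdeal_eq_span_X_pow (a : Fin n →₀ ℕ) :
    pureComponentIdeal k a = Ideal.span (Set.range fun i => X i ^ (a i + 1)) := by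
  unfold pureComponentIdeal
  congr 1
  ext f
  constructor
  · rintro (⟨i, -, rfl⟩ | ⟨j, hj, rfl⟩)
    · exact ⟨i, rfl⟩
    · exact ⟨j, by simp [hj]⟩
  · rintro ⟨i, rfl⟩
    rcases (a i).eq_zero_or_pos with hi | hi
    · exact Or.inr ⟨i, hi, by simp [hi]⟩
    · exact Or.inl ⟨i, hi, rfl⟩

theorem mem_pureComponentIdeal_iff {a : Fin n →₀ ℕ} {f : MvPolynomial (Fin n) k} :
    f ∈ pureComponentIdeal k a ↔ ∀ m ≤ a, coeff m f = 0 := by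
  have hgens : (Set.range fun i => (X i ^ (a i + 1) : MvPolynomial (Fin n) k)) =
      (fun e => monomial e (1 : k)) '' Set.range fun i => Finsupp.single i (a i + 1) := by
    rw [← Set.range_comp]
    simp only [Function.comp_def, X_pow_eq_monomial]
  rw [pureComponentIdeal_eq_span_X_pow, hgens, mem_ideal_span_monomial_image]
  simp only [Set.exists_range_iff, Finsupp.single_le_iff, Nat.add_one_le_iff, mem_support_iff]
  constructor
  · intro h m hm
    by_contra hne
    obtain ⟨i, hi⟩ := h m hne
    exact (hm i).not_gt hi
  · intro h m hm
    by_contra! hle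
    exact hm (h m (Finsupp.le_def.mpr hle))

theorem maxIdeal_eq_pureComponentIdeal_zero : maxIdeal k n = pureComponentIdeal k 0 := by
  simp [pureComponentIdeal_eq_span_X_pow, maxIdeal]

theorem mem_maxIdeal_iff {f : MvPolynomial (Fin n) k} : f ∈ maxIdeal k n ↔ coeff 0 f = 0 := by
  simp [maxIdeal_eq_pureComponentIdeal_zero, mem_pureComponentIdeal_iff]

theorem pureComponentIdeal_le_maxIdeal (a : Fin n →₀ ℕ) :
    pureComponentIdeal k a ≤ maxIdeal k n := fun _ hf =>
  mem_maxIdeal_iff.mpr (mem_pureComponentIdeal_iff.mp hf 0 zero_le)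

theorem monomial_mem_pureComponentIdeal {a m : Fin n →₀ ℕ} (h : ¬ m ≤ a) :
    monomial m (1 : k) ∈ pureComponentIdeal k a :=
  mem_pureComponentIdeal_iff.mpr fun m' hm' => by
    rw [coeff_monomial, if_neg (by rintro rfl; exact h hm')]

/-- A nonzero exponent lies below at most one `v i`, so below `v i` only the `i`-th truncation
contributes to the coefficients of the glued polynomial. -/
theorem exists_sub_mem_pureComponentIdeal {ι : Type*} [Fintype ι] (v : ι → Fin n →₀ ℕ)
    (hv : Pairwise fun i j => Disjoint (v i) (v j)) (f : ι → MvPolynomial (Fin n) k) (c : k)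
    (hf : ∀ i, coeff 0 (f i) = c) :
    ∃ F, ∀ i, F - f i ∈ pureComponentIdeal k (v i) := by
  refine ⟨C c + ∑ j, MvPowerSeries.trunc' k (v j) (f j - C c : MvPolynomial (Fin n) k),
    fun i => mem_pureComponentIdeal_iff.mpr fun m hm => ?_⟩
  simp only [coeff_sub, coeff_add, coeff_sum, MvPowerSeries.coeff_trunc', coeff_coe, coeff_C]
  rcases eq_or_ne m 0 with rfl | hm0
  · simp [hf]
  · have hunique : ∀ j, j ≠ i → ¬ m ≤ v j := fun j hji hmj =>
      hji (hv.eq fun h => hm0 (by simpa [bot_eq_zero] using h hmj hm))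
    rw [Finset.sum_eq_single i (fun j _ hji => if_neg (hunique j hji)) (by simp), if_pos hm,
      if_neg hm0.symm]
    ring

end PureComponent

section Structure

variable {I : Ideal (MvPolynomial (Fin n) k)}

theorem eq_iInf_pureComponentIdeal (hn : 1 ≤ n) (hI : IsMonomialIdeal I)
    (hfin : (survivors I).Finite) (hX : ∀ i : Fin n, (X i : MvPolynomial (Fin n) k) ∉ I) :
    I = ⨅ a : trulyIsolatedSet I, pureComponentIdeal k a.1 := by
  refine le_antisymm (le_iInf fun a => hI.le_of_monomial_mem fun m hm =>
    monomial_mem_pureComponentIdeal fun hle => a.2.1.2 (monomial_one_mem_of_le hm hle)) ?_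
  intro f hf
  refine hI.mem_iff.mpr fun m hm => (monomial_mem_iff_forall_not_le hn hfin hX).mpr ?_
  intro a ha hle
  exact mem_support_iff.mp hm
    (mem_pureComponentIdeal_iff.mp (Ideal.mem_iInf.mp hf ⟨a, ha⟩) m hle)

variable (hdisj : ∀ a ∈ trulyIsolatedSet I, ∀ b ∈ trulyIsolatedSet I, a ≠ b →
  ∀ i : Fin n, ¬ (0 < a i ∧ 0 < b i))
include hdisj

theorem eq_of_pos_of_pos {a b : Fin n →₀ ℕ} (ha : a ∈ trulyIsolatedSet I)
    (hb : b ∈ trulyIsolatedSet I) {i : Fin n} (hai : 0 < a i) (hbi : 0 < b i) : a = b :=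
  by_contra fun hab => hdisj a ha b hb hab i ⟨hai, hbi⟩

theorem pairwise_disjoint_trulyIsolatedSet :
    Pairwise fun a b : trulyIsolatedSet I => Disjoint a.1 b.1 := by
  intro a b hab
  rw [Finsupp.disjoint_iff, Finset.disjoint_left]
  intro i hia hib
  exact hab (Subtype.ext (eq_of_pos_of_pos hdisj a.2 b.2
    (Nat.pos_of_ne_zero (Finsupp.mem_support_iff.mp hia))
    (Nat.pos_of_ne_zero (Finsupp.mem_support_iff.mp hib))))

theorem purePowerGens_union_crossGens_subset (hn : 1 ≤ n) (hfin : (survivors I).Finite)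
    (hX : ∀ i : Fin n, (X i : MvPolynomial (Fin n) k) ∉ I) :
    purePowerGens I ∪ crossGens I ⊆ I := by
  rintro f (⟨a, ha, i, hai, rfl⟩ | ⟨a, ha, b, hb, hab, i, j, hai, hbj, rfl⟩)
  · rw [X_pow_eq_monomial, SetLike.mem_coe, monomial_mem_iff_forall_not_le hn hfin hX]
    intro c hc hle
    have hci := Finsupp.single_le_iff.mp hle
    obtain rfl := eq_of_pos_of_pos hdisj ha hc hai (by omega)
    omega
  · rw [X, X, monomial_mul, one_mul, SetLike.mem_coe, monomial_mem_iff_forall_not_le hn hfin hX]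
    intro c hc hle
    have hci := Finsupp.single_le_iff.mp (le_self_add.trans hle)
    have hcj := Finsupp.single_le_iff.mp (le_add_self.trans hle)
    exact hab ((eq_of_pos_of_pos hdisj ha hc hai hci).trans
      (eq_of_pos_of_pos hdisj hc hb hcj hbj))

theorem monomial_mem_span_purePowerGens_union_crossGens (hn : 1 ≤ n)
    (hfin : (survivors I).Finite) (hX : ∀ i : Fin n, (X i : MvPolynomial (Fin n) k) ∉ I)
    {m : Fin n →₀ ℕ} (hm : ∀ a ∈ trulyIsolatedSet I, ¬ m ≤ a) :
    monomial m (1 : k) ∈ Ideal.span (purePowerGens I ∪ crossGens I) := by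
  obtain ⟨i, hi⟩ : ∃ i, 0 < m i := by
    by_contra! h0
    obtain ⟨a, ha, -⟩ := exists_mem_trulyIsolatedSet_pos hfin hX ⟨0, hn⟩
    exact hm a ha fun j => (h0 j).trans zero_le
  obtain ⟨a, ha, hai⟩ := exists_mem_trulyIsolatedSet_pos hfin hX i
  obtain ⟨j, hj⟩ : ∃ j, a j < m j := by simpa [Finsupp.le_def] using hm a ha
  obtain ⟨b, hb, hbj⟩ := exists_mem_trulyIsolatedSet_pos hfin hX j
  by_cases hab : a = b
  · subst hab
    refine monomial_one_mem_of_le (e := Finsupp.single j (a j + 1))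
      (Ideal.subset_span (Or.inl ⟨a, ha, j, hbj, X_pow_eq_monomial.symm⟩)) ?_
    exact Finsupp.single_le_iff.mpr hj
  · have hij : i ≠ j := by
      rintro rfl
      exact hab (eq_of_pos_of_pos hdisj ha hb hai hbj)
    refine monomial_one_mem_of_le (e := Finsupp.single i 1 + Finsupp.single j 1)
      (Ideal.subset_span (Or.inr ⟨a, ha, b, hb, hab, i, j, hai, hbj, ?_⟩)) ?_
    · rw [X, X, monomial_mul, one_mul]
    · intro l
      simp only [Finsupp.add_apply, Finsupp.single_apply]
      split_ifs <;> subst_vars <;> omega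

theorem eq_span_purePowerGens_union_crossGens (hn : 1 ≤ n) (hI : IsMonomialIdeal I)
    (hfin : (survivors I).Finite) (hX : ∀ i : Fin n, (X i : MvPolynomial (Fin n) k) ∉ I) :
    I = Ideal.span (purePowerGens I ∪ crossGens I) :=
  le_antisymm
    (hI.le_of_monomial_mem fun _ hm => monomial_mem_span_purePowerGens_union_crossGens hdisj
      hn hfin hX ((monomial_mem_iff_forall_not_le hn hfin hX).mp hm))
    (Ideal.span_le.mpr (purePowerGens_union_crossGens_subset hdisj hn hfin hX))

theorem exists_mk_eq_of_factor_eq (hn : 1 ≤ n) (hfin : (survivors I).Finite)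
    (hX : ∀ i : Fin n, (X i : MvPolynomial (Fin n) k) ∉ I)
    (r : ∀ a : trulyIsolatedSet I, MvPolynomial (Fin n) k ⧸ pureComponentIdeal k a.1)
    (hr : ∀ a b : trulyIsolatedSet I,
      Ideal.Quotient.factor (pureComponentIdeal_le_maxIdeal a.1) (r a) =
        Ideal.Quotient.factor (pureComponentIdeal_le_maxIdeal b.1) (r b)) :
    ∃ F, ∀ a : trulyIsolatedSet I, Ideal.Quotient.mk _ F = r a := by
  have : Fintype (trulyIsolatedSet I) := (hfin.subset fun _ ha => ha.1).fintype
  choose f hf using fun a => Ideal.Quotient.mk_surjective (r a)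
  obtain ⟨a₀, ha₀, -⟩ := exists_mem_trulyIsolatedSet_pos hfin hX ⟨0, hn⟩
  have hcoeff : ∀ a, coeff 0 (f a) = coeff 0 (f ⟨a₀, ha₀⟩) := fun a => by
    have := hr a ⟨a₀, ha₀⟩
    rwa [← hf a, ← hf ⟨a₀, ha₀⟩, Ideal.Quotient.factor_mk, Ideal.Quotient.factor_mk,
      Ideal.Quotient.eq, mem_maxIdeal_iff, coeff_sub, sub_eq_zero] at this
  obtain ⟨F, hF⟩ := exists_sub_mem_pureComponentIdeal _
    (pairwise_disjoint_trulyIsolatedSet hdisj) f _ hcoeff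
  exact ⟨F, fun a => hf a ▸ Ideal.Quotient.eq.mpr (hF a)⟩

end Structure

end

theorem disjoint_truly_isolated_purePower_fibre_product_general
    {k : Type*} [Field k] {n : ℕ} (hn : 1 ≤ n)
    (I : Ideal (MvPolynomial (Fin n) k)) (hI : IsMonomialIdeal I)
    (hfin : (survivors I).Finite)
    (hX : ∀ i : Fin n, (X i : MvPolynomial (Fin n) k) ∉ I)
    (hdisj : ∀ a ∈ trulyIsolatedSet I, ∀ b ∈ trulyIsolatedSet I, a ≠ b →
      ∀ i : Fin n, ¬ (0 < a i ∧ 0 < b i)) :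
    I = Ideal.span (purePowerGens I ∪ crossGens I) ∧
      ∃ φ : (MvPolynomial (Fin n) k ⧸ I) →+*
          (∀ a : trulyIsolatedSet I, MvPolynomial (Fin n) k ⧸ pureComponentIdeal k a.1),
        (∀ a : trulyIsolatedSet I,
          ((Pi.evalRingHom
              (fun a : trulyIsolatedSet I =>
                MvPolynomial (Fin n) k ⧸ pureComponentIdeal k a.1) a).comp φ).comp
            (Ideal.Quotient.mk I) = Ideal.Quotient.mk (pureComponentIdeal k a.1)) ∧
        Function.Injective φ ∧
        ∃ ε : ∀ a : trulyIsolatedSet I,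
            (MvPolynomial (Fin n) k ⧸ pureComponentIdeal k a.1) →+*
              (MvPolynomial (Fin n) k ⧸ maxIdeal k n),
          (∀ a : trulyIsolatedSet I,
            (ε a).comp (Ideal.Quotient.mk (pureComponentIdeal k a.1)) =
              Ideal.Quotient.mk (maxIdeal k n)) ∧
          Set.range φ =
            {r : ∀ a : trulyIsolatedSet I,
                MvPolynomial (Fin n) k ⧸ pureComponentIdeal k a.1 |
              ∀ a b : trulyIsolatedSet I, ε a (r a) = ε b (r b)} := by
  have hInf := eq_iInf_pureComponentIdeal hn hI hfin hX
  have hle (a : trulyIsolatedSet I) : I ≤ pureComponentIdeal k a.1 := hInf.trans_le (iInf_le _ a)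
  refine ⟨eq_span_purePowerGens_union_crossGens hdisj hn hI hfin hX,
    RingHom.pi fun a => Ideal.Quotient.factor (hle a), fun a => rfl, ?_,
    fun a => Ideal.Quotient.factor (pureComponentIdeal_le_maxIdeal a.1), fun a => rfl, ?_⟩
  · refine (injective_iff_map_eq_zero _).mpr fun x hx => ?_
    obtain ⟨f, rfl⟩ := Ideal.Quotient.mk_surjective x
    refine Ideal.Quotient.eq_zero_iff_mem.mpr (hInf.ge (Ideal.mem_iInf.mpr fun a => ?_))
    exact Ideal.Quotient.eq_zero_iff_mem.mp (congrFun hx a)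
  · ext r
    constructor
    · rintro ⟨x, rfl⟩ a b
      obtain ⟨f, rfl⟩ := Ideal.Quotient.mk_surjective x
      rfl
    · intro hr
      obtain ⟨F, hF⟩ := exists_mk_eq_of_factor_eq hdisj hn hfin hX r hr
      exact ⟨Ideal.Quotient.mk I F, funext hF⟩

/-- If the truly isolated vertices of the survival complex pairwise share no
variables, then `I` is generated by the pure powers `X_i^{a_i+1}` (for `a`
truly isolated, `i ∈ supp a`) together with the cross products of variables
from distinct truly isolated vertices; consequently `A/I` is the fibre product
over `k` of the pure power rings `k[X_i : i ∈ supp a]/(X_i^{a_i+1} : i ∈ supp a)`,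
one for each truly isolated vertex `a`. -/
theorem disjoint_truly_isolated_purePower_fibre_product
    {k : Type*} [Field k] {n : ℕ} (hn : 1 ≤ n)
    (I : Ideal (MvPolynomial (Fin n) k)) (hI : IsMonomialIdeal I)
    (hproper : I ≠ ⊤) (hfin : (survivors I).Finite)
    (hX : ∀ i : Fin n, (X i : MvPolynomial (Fin n) k) ∉ I)
    (hdisj : ∀ a ∈ trulyIsolatedSet I, ∀ b ∈ trulyIsolatedSet I, a ≠ b →
      ∀ i : Fin n, ¬ (0 < a i ∧ 0 < b i)) :
    I = Ideal.span (purePowerGens I ∪ crossGens I) ∧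
      ∃ φ : (MvPolynomial (Fin n) k ⧸ I) →+*
          (∀ a : trulyIsolatedSet I, MvPolynomial (Fin n) k ⧸ pureComponentIdeal k a.1),
        (∀ a : trulyIsolatedSet I,
          ((Pi.evalRingHom
              (fun a : trulyIsolatedSet I =>
                MvPolynomial (Fin n) k ⧸ pureComponentIdeal k a.1) a).comp φ).comp
            (Ideal.Quotient.mk I) = Ideal.Quotient.mk (pureComponentIdeal k a.1)) ∧
        Function.Injective φ ∧
        ∃ ε : ∀ a : trulyIsolatedSet I,
            (MvPolynomial (Fin n) k ⧸ pureComponentIdeal k a.1) →+*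
              (MvPolynomial (Fin n) k ⧸ maxIdeal k n),
          (∀ a : trulyIsolatedSet I,
            (ε a).comp (Ideal.Quotient.mk (pureComponentIdeal k a.1)) =
              Ideal.Quotient.mk (maxIdeal k n)) ∧
          Set.range φ =
            {r : ∀ a : trulyIsolatedSet I,
                MvPolynomial (Fin n) k ⧸ pureComponentIdeal k a.1 |
              ∀ a b : trulyIsolatedSet I, ε a (r a) = ε b (r b)} :=
  disjoint_truly_isolated_purePower_fibre_product_general hn I hI hfin hX hdisj
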